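/- Let V be an object of the category of differential graded objects of A (each stalk a chain complex of ℚ-vector spaces, ℤ/2 acting on V_k, structure map a chain map). If each V_k is acyclic and (⊞_1 V)^{ℤ/2} is acyclic, then V_∞ is acyclic. Consequently, an object of dg-A is weakly equivalent to zero if and only if all V_k and (⊞_1 V)^{ℤ/2} are acyclic. -/

import Mathlib

open scoped TensorProduct

universe u

variable {V W U : ℕ → Type u}
  [∀ k, AddCommGroup (V k)] [∀ k, Module ℚ (V k)]
  [∀ k, AddCommGroup (W k)] [∀ k, Module ℚ (W k)]
  [∀ k, AddCommGroup (U k)] [∀ k, Module ℚ (U k)]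

/-- The submodule of eventually-zero sequences in `∏ k, V k`. -/
def evZero (V : ℕ → Type u) [∀ k, AddCommGroup (V k)] [∀ k, Module ℚ (V k)] :
    Submodule ℚ (∀ k, V k) where
  carrier := {x | ∃ N, ∀ k, N ≤ k → x k = 0}
  add_mem' := by
    rintro x y ⟨N, hN⟩ ⟨M, hM⟩
    exact ⟨max N M, fun k hk => by
      simp [hN k (le_trans (le_max_left _ _) hk), hM k (le_trans (le_max_right _ _) hk)]⟩
  zero_mem' := ⟨0, fun k _ => rfl⟩
  smul_mem' := by
    rintro c x ⟨N, hN⟩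
    exact ⟨N, fun k hk => by simp [hN k hk]⟩

/-- `colim_n ∏_{k ≥ n} V_k`, realised concretely as the quotient of `∏ k, V k` by the
submodule of eventually-zero sequences. -/
def VEnd (V : ℕ → Type u) [∀ k, AddCommGroup (V k)] [∀ k, Module ℚ (V k)] : Type u :=
  (∀ k, V k) ⧸ evZero V

instance : AddCommGroup (VEnd V) := by unfold VEnd; infer_instance
instance : Module ℚ (VEnd V) := by unfold VEnd; infer_instance

/-- The class of a sequence in `VEnd V`. -/
def VEnd.mk : (∀ k, V k) →ₗ[ℚ] VEnd V := (evZero V).mkQ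

/-- The map induced on `VEnd` by a family of linear maps. -/
def endMap (f : ∀ k, V k →ₗ[ℚ] W k) : VEnd V →ₗ[ℚ] VEnd W :=
  Submodule.mapQ _ _ (LinearMap.pi fun k => (f k).comp (LinearMap.proj k))
    (by rintro x ⟨N, hN⟩; exact ⟨N, fun k hk => by simp [LinearMap.pi, hN k hk]⟩)

@[simp] lemma endMap_mk (f : ∀ k, V k →ₗ[ℚ] W k) (x : ∀ k, V k) :
    endMap f (VEnd.mk x) = VEnd.mk (fun k => f k (x k)) := rfl

@[simp] lemma endMap_id : endMap (fun k => (LinearMap.id : V k →ₗ[ℚ] V k)) = LinearMap.id := by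
  refine Submodule.linearMap_qext _ ?_
  ext x
  rfl

lemma endMap_comp (f : ∀ k, V k →ₗ[ℚ] W k) (g : ∀ k, W k →ₗ[ℚ] U k) :
    endMap (fun k => (g k).comp (f k)) = (endMap g).comp (endMap f) := by
  refine Submodule.linearMap_qext _ ?_
  ext x
  rfl

lemma endMap_add (f g : ∀ k, V k →ₗ[ℚ] W k) :
    endMap (fun k => f k + g k) = endMap f + endMap g := by
  refine Submodule.linearMap_qext _ ?_
  ext x
  show endMap _ (VEnd.mk x) = endMap f (VEnd.mk x) + endMap g (VEnd.mk x)
  simp only [endMap_mk]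
  rw [← map_add]
  rfl

lemma endMap_smul (c : ℚ) (f : ∀ k, V k →ₗ[ℚ] W k) :
    endMap (fun k => c • f k) = c • endMap f := by
  refine Submodule.linearMap_qext _ ?_
  ext x
  show endMap _ (VEnd.mk x) = c • endMap f (VEnd.mk x)
  simp only [endMap_mk]
  rw [← map_smul]
  rfl

lemma endMap_zero : endMap (fun k => (0 : V k →ₗ[ℚ] W k)) = 0 := by
  refine Submodule.linearMap_qext _ ?_
  ext x
  show endMap _ (VEnd.mk x) = 0
  simp only [endMap_mk]
  show VEnd.mk (fun _ => 0) = 0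
  rw [← map_zero (VEnd.mk (V := W))]
  rfl

/-- An object of the algebraic model `𝒜(𝒟)` (in the ungraded setting): a rational vector
space `Vinf` (the stalk at `∞`, with trivial `ℤ/2`-action), rational vector spaces `V k`
with a `ℤ/2`-action (given by the involution `w k`) for each `k`, and an equivariant
linear structure map `sig : Vinf → colim_n ∏_{k ≥ n} V k`. -/
structure AObj : Type (u + 1) where
  Vinf : Type u
  [addInf : AddCommGroup Vinf]
  [modInf : Module ℚ Vinf]
  V : ℕ → Type u
  [addV : ∀ k, AddCommGroup (V k)]
  [modV : ∀ k, Module ℚ (V k)]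
  w : ∀ k, V k →ₗ[ℚ] V k
  w_sq : ∀ k, (w k).comp (w k) = LinearMap.id
  sig : Vinf →ₗ[ℚ] VEnd V
  sig_w : (endMap w).comp sig = sig

attribute [instance] AObj.addInf AObj.modInf AObj.addV AObj.modV

/-- A morphism in the algebraic model: a linear map at `∞` and `ℤ/2`-equivariant linear
maps at each `k`, compatible with the structure maps. -/
@[ext] structure AHom (A B : AObj.{u}) : Type u where
  finf : A.Vinf →ₗ[ℚ] B.Vinf
  f : ∀ k, A.V k →ₗ[ℚ] B.V k
  equivar : ∀ k, (f k).comp (A.w k) = (B.w k).comp (f k)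
  comm : (endMap f).comp A.sig = B.sig.comp finf

open CategoryTheory

instance : Category AObj.{u} where
  Hom := AHom
  id A := ⟨LinearMap.id, fun _ => LinearMap.id, fun k => by simp, by simp⟩
  comp {A B C} f g :=
    ⟨g.finf.comp f.finf, fun k => (g.f k).comp (f.f k),
      fun k => by
        rw [LinearMap.comp_assoc, f.equivar k, ← LinearMap.comp_assoc, g.equivar k,
          LinearMap.comp_assoc],
      by
        rw [endMap_comp, LinearMap.comp_assoc, f.comm, ← LinearMap.comp_assoc, g.comm,
          LinearMap.comp_assoc]⟩
  id_comp f := by apply AHom.ext <;> rfl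
  comp_id f := by apply AHom.ext <;> rfl
  assoc f g h := by apply AHom.ext <;> rfl

@[simp] lemma AHom_id_f (A : AObj) (k : ℕ) : AHom.f (𝟙 A) k = LinearMap.id := rfl
@[simp] lemma AHom_id_finf (A : AObj) : AHom.finf (𝟙 A) = LinearMap.id := rfl
@[simp] lemma AHom_comp_f {A B C : AObj} (f : A ⟶ B) (g : B ⟶ C) (k : ℕ) :
    AHom.f (f ≫ g) k = (g.f k).comp (f.f k) := rfl
@[simp] lemma AHom_comp_finf {A B C : AObj} (f : A ⟶ B) (g : B ⟶ C) :
    AHom.finf (f ≫ g) = g.finf.comp f.finf := rfl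

/-- Addition of morphisms (the hom-sets of `𝒜(𝒟)` are `ℚ`-vector spaces). -/
instance (A B : AObj) : Add (AHom A B) :=
  ⟨fun f g =>
    ⟨f.finf + g.finf, fun k => f.f k + g.f k,
      fun k => by
        rw [LinearMap.add_comp, LinearMap.comp_add, f.equivar k, g.equivar k],
      by rw [endMap_add, LinearMap.add_comp, LinearMap.comp_add, f.comm, g.comm]⟩⟩

instance (A B : AObj) : Zero (AHom A B) :=
  ⟨⟨0, fun _ => 0, fun k => by simp, by rw [endMap_zero]; simp⟩⟩

instance (A B : AObj) : SMul ℚ (AHom A B) :=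
  ⟨fun c f =>
    ⟨c • f.finf, fun k => c • f.f k,
      fun k => by rw [LinearMap.smul_comp, LinearMap.comp_smul, f.equivar k],
      by rw [endMap_smul, LinearMap.smul_comp, LinearMap.comp_smul, f.comm]⟩⟩

instance (A B : AObj.{u}) : Add (A ⟶ B) := inferInstanceAs (Add (AHom A B))
instance (A B : AObj.{u}) : Zero (A ⟶ B) := inferInstanceAs (Zero (AHom A B))
instance (A B : AObj.{u}) : SMul ℚ (A ⟶ B) := inferInstanceAs (SMul ℚ (AHom A B))

open CategoryTheory Limits

/-- The stalk functor `p_k : 𝒜(𝒟) → ℚ-Mod` (forgetting the `ℤ/2`-action). -/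
@[simps] def pkFun (k : ℕ) : AObj.{u} ⥤ ModuleCat.{u} ℚ where
  obj A := ModuleCat.of ℚ (A.V k)
  map φ := ModuleCat.ofHom (φ.f k)

/-- The stalk-at-`∞` functor `p_∞ : 𝒜(𝒟) → ℚ-Mod`. -/
@[simps] def pinfFun : AObj.{u} ⥤ ModuleCat.{u} ℚ where
  obj A := ModuleCat.of ℚ A.Vinf
  map φ := ModuleCat.ofHom φ.finf

/-- The constant object `cM`: all stalks equal to `M` with trivial `ℤ/2`-action, and
structure map induced by the diagonal `M → ∏_k M`. -/
def cObj (M : Type u) [AddCommGroup M] [Module ℚ M] : AObj.{u} where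
  Vinf := M
  V _ := M
  w _ := LinearMap.id
  w_sq _ := by simp
  sig := VEnd.mk.comp (LinearMap.pi fun _ => LinearMap.id)
  sig_w := by rw [endMap_id]; simp

/-- `⊞_N V`, the pullback of `V_∞ → colim_n ∏_{k ≥ n} V_k ← ∏_{k ≥ N} V_k`, realised as
the submodule of `V_∞ × ∏_k V_k` of pairs `(v, x)` with `σ(v) = [x]` and `x k = 0` for
`k < N`.  (Stalks are indexed by `ℕ` starting at `0`, so the paper's `⊞_1` is `BoxPlus 0`
and the paper's `⊞_N` is `BoxPlus (N-1)`.) -/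
def BoxPlus (N : ℕ) (A : AObj.{u}) : Submodule ℚ (A.Vinf × ∀ k, A.V k) where
  carrier := {p | A.sig p.1 = VEnd.mk p.2 ∧ ∀ k < N, p.2 k = 0}
  add_mem' := by
    rintro p q ⟨hp, hp'⟩ ⟨hq, hq'⟩
    refine ⟨?_, fun k hk => by simp [hp' k hk, hq' k hk]⟩
    show A.sig (p.1 + q.1) = VEnd.mk (p.2 + q.2)
    rw [map_add, map_add, hp, hq]
  zero_mem' := by
    refine ⟨?_, fun k _ => rfl⟩
    show A.sig 0 = VEnd.mk 0
    simp
  smul_mem' := by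
    rintro c p ⟨hp, hp'⟩
    refine ⟨?_, fun k hk => by simp [hp' k hk]⟩
    show A.sig (c • p.1) = VEnd.mk (c • p.2)
    rw [map_smul, map_smul, hp]

/-- The ambient linear map underlying the induced map `⊞_N A → ⊞_N B` of a morphism. -/
def boxAmbient {A B : AObj.{u}} (φ : A ⟶ B) :
    (A.Vinf × ∀ k, A.V k) →ₗ[ℚ] (B.Vinf × ∀ k, B.V k) :=
  LinearMap.prodMap φ.finf (LinearMap.pi fun k => (φ.f k).comp (LinearMap.proj k))

lemma boxAmbient_mem {A B : AObj.{u}} (φ : A ⟶ B) (N : ℕ) {p : A.Vinf × ∀ k, A.V k}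
    (hp : p ∈ BoxPlus N A) : boxAmbient φ p ∈ BoxPlus N B := by
  obtain ⟨h1, h2⟩ := hp
  constructor
  · show B.sig (φ.finf p.1) = VEnd.mk fun k => φ.f k (p.2 k)
    have := congrArg (fun g => g p.1) φ.comm.symm
    simp only [LinearMap.comp_apply] at this
    rw [this, h1, endMap_mk]
  · intro k hk
    show φ.f k (p.2 k) = 0
    rw [h2 k hk, map_zero]

/-- The induced map `⊞_N A → ⊞_N B` of a morphism of `𝒜(𝒟)`. -/
def boxMap {A B : AObj.{u}} (φ : A ⟶ B) (N : ℕ) : BoxPlus N A →ₗ[ℚ] BoxPlus N B :=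
  (boxAmbient φ).restrict fun _ hp => boxAmbient_mem φ N hp

/-- The involution (`ℤ/2`-action) on `⊞_N A`. -/
def wBox (A : AObj.{u}) (N : ℕ) : BoxPlus N A →ₗ[ℚ] BoxPlus N A :=
  boxMap (show A ⟶ A from
    ⟨LinearMap.id, A.w, fun k => rfl, by
      rw [A.sig_w]; rfl⟩) N

/-- The `⊞_1 = BoxPlus 0` functor `𝒜(𝒟) → ℚ-Mod`. -/
@[simps] def box0Fun : AObj.{u} ⥤ ModuleCat.{u} ℚ where
  obj A := ModuleCat.of ℚ (BoxPlus 0 A)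
  map φ := ModuleCat.ofHom (boxMap φ 0)
  map_id A := by
    refine ModuleCat.hom_ext (LinearMap.ext fun p => ?_)
    apply Subtype.ext
    rfl
  map_comp f g := by
    refine ModuleCat.hom_ext (LinearMap.ext fun p => ?_)
    apply Subtype.ext
    rfl

/-- The submodule of `(v, x)` with all `x k` fixed by the involutions. -/
def fixCond (A : AObj.{u}) : Submodule ℚ (A.Vinf × ∀ k, A.V k) where
  carrier := {p | ∀ k, A.w k (p.2 k) = p.2 k}
  add_mem' := by
    intro p q hp hq k
    show A.w k (p.2 k + q.2 k) = _
    rw [map_add, hp k, hq k]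
    rfl
  zero_mem' := by
    intro k
    show A.w k 0 = 0
    simp
  smul_mem' := by
    intro c p hp k
    show A.w k (c • p.2 k) = _
    rw [map_smul, hp k]
    rfl

/-- `(⊞_N V)^{ℤ/2}`, the `ℤ/2`-fixed points of `⊞_N V`. -/
def BoxW (N : ℕ) (A : AObj.{u}) : Submodule ℚ (A.Vinf × ∀ k, A.V k) :=
  BoxPlus N A ⊓ fixCond A

lemma boxAmbient_memW {A B : AObj.{u}} (φ : A ⟶ B) (N : ℕ) {p : A.Vinf × ∀ k, A.V k}
    (hp : p ∈ BoxW N A) : boxAmbient φ p ∈ BoxW N B := by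
  refine ⟨boxAmbient_mem φ N hp.1, fun k => ?_⟩
  show B.w k (φ.f k (p.2 k)) = φ.f k (p.2 k)
  have := congrArg (fun g => g (p.2 k)) (φ.equivar k)
  simp only [LinearMap.comp_apply] at this
  rw [← this, hp.2 k]

/-- The map induced on `ℤ/2`-fixed points of `⊞_N`. -/
def boxWMap {A B : AObj.{u}} (φ : A ⟶ B) (N : ℕ) : BoxW N A →ₗ[ℚ] BoxW N B :=
  (boxAmbient φ).restrict fun _ hp => boxAmbient_memW φ N hp

/-- The functor `V ↦ (⊞_N V)^{ℤ/2}` from `𝒜(𝒟)` to `ℚ`-modules. -/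
@[simps] def boxWFun (N : ℕ) : AObj.{u} ⥤ ModuleCat.{u} ℚ where
  obj A := ModuleCat.of ℚ (BoxW N A)
  map φ := ModuleCat.ofHom (boxWMap φ N)
  map_id A := by
    refine ModuleCat.hom_ext (LinearMap.ext fun p => ?_)
    apply Subtype.ext
    rfl
  map_comp f g := by
    refine ModuleCat.hom_ext (LinearMap.ext fun p => ?_)
    apply Subtype.ext
    rfl

/-- The ambient map `(v, x) ↦ (v, x with coordinate N zeroed out)`. -/
def zeroAmbient (A : AObj.{u}) (N : ℕ) :
    (A.Vinf × ∀ k, A.V k) →ₗ[ℚ] (A.Vinf × ∀ k, A.V k) :=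
  LinearMap.prodMap LinearMap.id
    (LinearMap.pi fun k => if k = N then 0 else LinearMap.proj k)

lemma zeroAmbient_mem (A : AObj.{u}) (N : ℕ) {p : A.Vinf × ∀ k, A.V k}
    (hp : p ∈ BoxW N A) : zeroAmbient A N p ∈ BoxW (N + 1) A := by
  obtain ⟨⟨h1, h2⟩, h3⟩ := hp
  have hx : (zeroAmbient A N p).2 = fun k => if k = N then 0 else p.2 k := by
    funext k
    show (if k = N then (0 : (∀ j, A.V j) →ₗ[ℚ] A.V k) else LinearMap.proj k) p.2 = _
    split_ifs <;> rfl
  refine ⟨⟨?_, ?_⟩, ?_⟩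
  · show A.sig p.1 = VEnd.mk (zeroAmbient A N p).2
    rw [h1, hx]
    show Submodule.Quotient.mk _ = Submodule.Quotient.mk _
    rw [Submodule.Quotient.eq]
    exact ⟨N + 1, fun k hk => by
      have : k ≠ N := by omega
      simp [this]⟩
  · intro k hk
    rw [hx]
    by_cases h : k = N
    · simp [h]
    · have : k < N := by omega
      simp [h, h2 k this]
  · intro k
    rw [hx]
    by_cases h : k = N
    · simp [h]
    · simpa [h] using h3 k

/-- The natural transformation `(⊞_N)^{ℤ/2} ⟶ (⊞_{N+1})^{ℤ/2}` which zeroes out the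
coordinate `N`. -/
@[simps] def zeroNatTrans (N : ℕ) : boxWFun.{u} N ⟶ boxWFun.{u} (N + 1) where
  app A := ModuleCat.ofHom ((zeroAmbient A N).restrict fun _ hp => zeroAmbient_mem A N hp)
  naturality A B φ := by
    refine ModuleCat.hom_ext (LinearMap.ext fun p => ?_)
    obtain ⟨⟨v, x⟩, hp⟩ := p
    apply Subtype.ext
    apply Prod.ext
    · rfl
    · funext k
      show (if k = N then (0 : (∀ j, B.V j) →ₗ[ℚ] B.V k) else LinearMap.proj k)
          (fun j => φ.f j (x j)) =
        φ.f k ((if k = N then (0 : (∀ j, A.V j) →ₗ[ℚ] A.V k) else LinearMap.proj k) x)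
      split_ifs <;> simp


/-! Over `ℚ` one can average over `ℤ/2`: every class of `colim_n ∏_{k ≥ n} V_k` in the image of
`σ` has a fixed representative, and a fixed boundary in a stalk is the boundary of a fixed chain.
If `v` is a cycle of `V_∞` and `x` a fixed representative of `σ(v)`, then `dx` is eventually zero;
correcting the finitely many remaining coordinates by fixed stalk chains turns `(v, x)` into a
cycle of `(⊞_1 V)^{ℤ/2}`, and the first coordinate of a chain bounding it bounds `v`. Conversely,
a cycle `(v, x)` of `(⊞_1 V)^{ℤ/2}` with `v = du` is bounded by `(u, y + a)`, where `y` is a fixed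
representative of `σ(u)` and `a` a finitely supported fixed chain with `da = x - dy`. -/

lemma VEnd.mk_eq_mk_iff {x y : ∀ k, V k} : VEnd.mk x = VEnd.mk (V := V) y ↔ x - y ∈ evZero V :=
  Submodule.Quotient.eq _

lemma VEnd.mk_eq_zero_iff {x : ∀ k, V k} : VEnd.mk x = 0 ↔ x ∈ evZero V :=
  Submodule.Quotient.mk_eq_zero _

section Averaging

variable {M : Type*} [AddCommGroup M] [Module ℚ M] {w : M →ₗ[ℚ] M}

lemma inv_two_smul_add_self (a : M) : (2⁻¹ : ℚ) • (a + a) = a := by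
  rw [← two_smul ℚ a, smul_smul]
  norm_num

lemma average_fixed (hw : ∀ a, w (w a) = a) (a : M) :
    w ((2⁻¹ : ℚ) • (a + w a)) = (2⁻¹ : ℚ) • (a + w a) := by
  rw [map_smul, map_add, hw, add_comm]

lemma average_of_fixed {a : M} (ha : w a = a) : (2⁻¹ : ℚ) • (a + w a) = a := by
  rw [ha, inv_two_smul_add_self]

end Averaging

lemma AObj.w_w (A : AObj.{u}) (k : ℕ) (a : A.V k) : A.w k (A.w k a) = a :=
  LinearMap.congr_fun (A.w_sq k) a

lemma AHom.f_w {A B : AObj.{u}} (φ : A ⟶ B) (k : ℕ) (a : A.V k) :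
    φ.f k (A.w k a) = B.w k (φ.f k a) :=
  LinearMap.congr_fun (φ.equivar k) a

lemma AHom.endMap_sig {A B : AObj.{u}} (φ : A ⟶ B) (v : A.Vinf) :
    endMap φ.f (A.sig v) = B.sig (φ.finf v) :=
  LinearMap.congr_fun φ.comm v

lemma AHom.finf_finf_eq_zero {A B C : AObj.{u}} {φ : A ⟶ B} {ψ : B ⟶ C} (h : φ ≫ ψ = 0)
    (a : A.Vinf) : ψ.finf (φ.finf a) = 0 :=
  LinearMap.congr_fun (congrArg AHom.finf h) a

lemma AHom.f_f_eq_zero {A B C : AObj.{u}} {φ : A ⟶ B} {ψ : B ⟶ C} (h : φ ≫ ψ = 0)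
    (k : ℕ) (a : A.V k) : ψ.f k (φ.f k a) = 0 :=
  LinearMap.congr_fun (congrArg (AHom.f · k) h) a

lemma boxWMap_boxWMap_eq_zero {A B C : AObj.{u}} {φ : A ⟶ B} {ψ : B ⟶ C} (h : φ ≫ ψ = 0)
    (N : ℕ) (p : BoxW N A) : boxWMap ψ N (boxWMap φ N p) = 0 :=
  Subtype.ext <| Prod.ext (AHom.finf_finf_eq_zero h p.1.1)
    (funext fun k => AHom.f_f_eq_zero h k (p.1.2 k))

lemma mem_boxW_zero {A : AObj.{u}} {p : A.Vinf × ∀ k, A.V k} :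
    p ∈ BoxW 0 A ↔ A.sig p.1 = VEnd.mk p.2 ∧ ∀ k, A.w k (p.2 k) = p.2 k :=
  ⟨fun h => ⟨h.1.1, h.2⟩, fun h => ⟨⟨h.1, fun k hk => absurd hk (Nat.not_lt_zero k)⟩, h.2⟩⟩

lemma AObj.exists_fixed_rep (A : AObj.{u}) (v : A.Vinf) :
    ∃ x : ∀ k, A.V k, (∀ k, A.w k (x k) = x k) ∧ A.sig v = VEnd.mk x := by
  obtain ⟨x₀, hx₀⟩ := Submodule.mkQ_surjective (evZero A.V) (A.sig v)
  change VEnd.mk x₀ = A.sig v at hx₀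
  have hwx₀ : endMap A.w (VEnd.mk x₀) = VEnd.mk x₀ := by
    rw [hx₀]
    exact LinearMap.congr_fun A.sig_w v
  refine ⟨(2⁻¹ : ℚ) • (x₀ + fun k => A.w k (x₀ k)), fun k => average_fixed (A.w_w k) (x₀ k), ?_⟩
  rw [map_smul, map_add, ← endMap_mk, hwx₀, hx₀]
  exact (inv_two_smul_add_self _).symm

lemma AHom.exists_fixed_preimage {A B : AObj.{u}} (φ : A ⟶ B) {k : ℕ} {b : B.V k}
    (hfix : B.w k b = b) (hb : b ∈ Set.range (φ.f k)) : ∃ a, A.w k a = a ∧ φ.f k a = b := by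
  obtain ⟨a₀, rfl⟩ := hb
  refine ⟨(2⁻¹ : ℚ) • (a₀ + A.w k a₀), average_fixed (A.w_w k) a₀, ?_⟩
  rw [map_smul, map_add, φ.f_w, average_of_fixed hfix]

lemma AHom.exists_fixed_evZero_preimage {A B : AObj.{u}} (φ : A ⟶ B) {b : ∀ k, B.V k}
    (hfix : ∀ k, B.w k (b k) = b k) (hev : b ∈ evZero B.V)
    (hb : ∀ k, b k ∈ Set.range (φ.f k)) :
    ∃ a ∈ evZero A.V, (∀ k, A.w k (a k) = a k) ∧ ∀ k, φ.f k (a k) = b k := by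
  have hpre : ∀ k, ∃ a, A.w k a = a ∧ φ.f k a = b k ∧ (b k = 0 → a = 0) := fun k => by
    by_cases hbk : b k = 0
    · exact ⟨0, map_zero _, by rw [map_zero, hbk], fun _ => rfl⟩
    · obtain ⟨a, ha⟩ := φ.exists_fixed_preimage (hfix k) (hb k)
      exact ⟨a, ha.1, ha.2, fun h => absurd h hbk⟩
  choose a hafix ha hzero using hpre
  obtain ⟨N, hN⟩ := hev
  exact ⟨a, ⟨N, fun k hk => hzero k (hN k hk)⟩, hafix, ha⟩

lemma exact_finf_of_exact_boxWMap {A B C D : AObj.{u}} (ρ : A ⟶ B) (φ : B ⟶ C) (ψ : C ⟶ D)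
    (hρφ : ρ ≫ φ = 0) (hφψ : φ ≫ ψ = 0) (hk : ∀ k, Function.Exact (φ.f k) (ψ.f k))
    (hbox : Function.Exact (boxWMap ρ 0) (boxWMap φ 0)) :
    Function.Exact ρ.finf φ.finf := by
  refine .of_comp_of_mem_range (funext (AHom.finf_finf_eq_zero hρφ)) fun v hv => ?_
  obtain ⟨x, hxfix, hx⟩ := B.exists_fixed_rep v
  have hdx : (fun k => φ.f k (x k)) ∈ evZero C.V := by
    rw [← VEnd.mk_eq_zero_iff, ← endMap_mk, ← hx, φ.endMap_sig, hv, map_zero]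
  obtain ⟨a, ha_ev, hafix, ha⟩ := φ.exists_fixed_evZero_preimage
    (fun k => by rw [← φ.f_w, hxfix]) hdx fun k => (hk k _).mp (AHom.f_f_eq_zero hφψ k _)
  have hmem : (v, x - a) ∈ BoxW 0 B := by
    refine mem_boxW_zero.mpr ⟨?_, fun k => ?_⟩
    · rw [hx, VEnd.mk_eq_mk_iff, sub_sub_cancel]
      exact ha_ev
    · simp only [Pi.sub_apply, map_sub, hxfix, hafix]
  obtain ⟨q, hq⟩ := (hbox ⟨(v, x - a), hmem⟩).mp <|
    Subtype.ext <| Prod.ext hv <| funext fun k => by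
      change φ.f k (x k - a k) = 0
      rw [map_sub, ha, sub_self]
  exact ⟨q.1.1, congrArg (fun p => p.1.1) hq⟩

lemma exact_boxWMap_of_exact_finf {A B C : AObj.{u}} (ρ : A ⟶ B) (φ : B ⟶ C)
    (hρφ : ρ ≫ φ = 0) (hk : ∀ k, Function.Exact (ρ.f k) (φ.f k))
    (hinf : Function.Exact ρ.finf φ.finf) :
    Function.Exact (boxWMap ρ 0) (boxWMap φ 0) := by
  refine .of_comp_of_mem_range (funext (boxWMap_boxWMap_eq_zero hρφ 0)) ?_
  rintro ⟨⟨v, x⟩, hp⟩ hp0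
  obtain ⟨hsig, hxfix⟩ := mem_boxW_zero.mp hp
  obtain ⟨u, rfl⟩ := (hinf v).mp (congrArg (fun p => p.1.1) hp0)
  have hx : ∀ k, φ.f k (x k) = 0 := fun k => congrArg (fun p => p.1.2 k) hp0
  obtain ⟨y, hyfix, hy⟩ := A.exists_fixed_rep u
  have hb : (x - fun k => ρ.f k (y k)) ∈ evZero B.V := by
    rw [← VEnd.mk_eq_mk_iff, ← hsig, ← ρ.endMap_sig, hy, endMap_mk]
  obtain ⟨a, ha_ev, hafix, ha⟩ := ρ.exists_fixed_evZero_preimage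
    (fun k => by simp only [Pi.sub_apply, map_sub, hxfix, ← ρ.f_w, hyfix]) hb
    fun k => (hk k _).mp (by simp only [Pi.sub_apply, map_sub, hx, AHom.f_f_eq_zero hρφ, sub_zero])
  have hmem : (u, y + a) ∈ BoxW 0 A := by
    refine mem_boxW_zero.mpr ⟨?_, fun k => ?_⟩
    · rw [hy, VEnd.mk_eq_mk_iff, sub_add_cancel_left]
      exact neg_mem ha_ev
    · simp only [Pi.add_apply, map_add, hyfix, hafix]
  refine ⟨⟨(u, y + a), hmem⟩, Subtype.ext <| Prod.ext rfl <| funext fun k => ?_⟩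
  change ρ.f k (y k + a k) = x k
  rw [map_add, ha, Pi.sub_apply, add_sub_cancel]

/-- let `V` be a chain complex in `𝒜(𝒟)` (objects `X n` of `𝒜(𝒟)` and
differentials `d n : X (n+1) ⟶ X n` with `d ∘ d = 0`; each stalk is then a chain complex
of `ℚ`-vector spaces with `ℤ/2`-action and the structure maps are chain maps).  If every
stalk complex `V_k` is acyclic (exact) and the complex of global sections
`(⊞_1 V)^{ℤ/2}` is acyclic, then the stalk `V_∞` at `∞` is acyclic.  Consequently `V` is
weakly equivalent to zero (all stalks `V_k`, `V_∞` acyclic) if and only if all the `V_k`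
and `(⊞_1 V)^{ℤ/2}` are acyclic. -/
theorem statement18 (X : ℤ → AObj.{u}) (d : ∀ n : ℤ, X (n + 1) ⟶ X n)
    (hd : ∀ n : ℤ, d (n + 1) ≫ d n = 0) :
    ((∀ (k : ℕ) (n : ℤ), Function.Exact ((d (n + 1)).f k) ((d n).f k)) →
      (∀ n : ℤ, Function.Exact (boxWMap (d (n + 1)) 0) (boxWMap (d n) 0)) →
      ∀ n : ℤ, Function.Exact (d (n + 1)).finf (d n).finf) ∧
    (((∀ (k : ℕ) (n : ℤ), Function.Exact ((d (n + 1)).f k) ((d n).f k)) ∧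
        (∀ n : ℤ, Function.Exact (d (n + 1)).finf (d n).finf)) ↔
      ((∀ (k : ℕ) (n : ℤ), Function.Exact ((d (n + 1)).f k) ((d n).f k)) ∧
        (∀ n : ℤ, Function.Exact (boxWMap (d (n + 1)) 0) (boxWMap (d n) 0)))) := by
  have inf_exact : (∀ (k : ℕ) (n : ℤ), Function.Exact ((d (n + 1)).f k) ((d n).f k)) →
      (∀ n : ℤ, Function.Exact (boxWMap (d (n + 1)) 0) (boxWMap (d n) 0)) →
      ∀ n : ℤ, Function.Exact (d (n + 1)).finf (d n).finf := by
    intro hk hbox n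
    -- write `n = m + 1`, so that exactness of the stalks at `X n` reads `hk · m`
    obtain ⟨m, rfl⟩ : ∃ m, n = m + 1 := ⟨n - 1, by ring⟩
    exact exact_finf_of_exact_boxWMap _ _ (d m) (hd _) (hd m) (hk · m) (hbox _)
  exact ⟨inf_exact,
    fun ⟨hk, hinf⟩ => ⟨hk, fun n => exact_boxWMap_of_exact_finf _ _ (hd n) (hk · n) (hinf n)⟩,
    fun ⟨hk, hbox⟩ => ⟨hk, inf_exact hk hbox⟩⟩
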